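/- arXiv:2312.04570 — 2 statements merged into one kernel-verified Lean document; each statement's English description precedes it below -/
import Mathlib

section
/- For any finite MDP with discount factor γ ∈ [0,1): (i) there exists a policy π* that is optimal, i.e. v_{π*}(s) ≥ v_π(s) for every policy π and every state s; (ii) there always exists a deterministic optimal policy; (iii) every optimal policy π* satisfies v_{π*}(s) = v*(s) for all s; and (iv) every optimal policy π* satisfies q_{π*}(s,a) = q*(s,a) for all s,a. -/
open Finset

/-- A (stationary stochastic) policy on a finite action set: for each state `s`,
`prob s` is a probability distribution over actions. -/
structure Policy (S A : Type*) [Fintype A] where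
  prob : S → A → ℝ
  nonneg : ∀ s a, 0 ≤ prob s a
  sum_one : ∀ s, ∑ a : A, prob s a = 1

/-- A finite Markov decision process: finite state set `S`, finite action set `A`,
finite reward-label set `R` whose real value is given by `val`, and dynamics
`p s a s' r = p(s', r | s, a)`. -/
structure FinMDP (S A R : Type*) [Fintype S] [Fintype A] [Fintype R] where
  p : S → A → S → R → ℝ
  val : R → ℝ
  p_nonneg : ∀ s a s' r, 0 ≤ p s a s' r
  p_sum_one : ∀ s a, (∑ s' : S, ∑ r : R, p s a s' r) = 1

variable {S A R : Type*} [Fintype S] [Fintype A] [Fintype R]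

/-- `qStep M π k s a` is the expected reward received at time `k+1` when starting
in state `s`, taking action `a`, and thereafter following the policy `π`. -/
noncomputable def qStep (M : FinMDP S A R) (π : Policy S A) : ℕ → S → A → ℝ
  | 0 => fun s a => ∑ s' : S, ∑ r : R, M.p s a s' r * M.val r
  | (k + 1) => fun s a => ∑ s' : S, ∑ r : R, M.p s a s' r *
      ∑ a' : A, π.prob s' a' * qStep M π k s' a'

/-- `vStep M π k s` is the expected reward received at time `k+1` when starting
in state `s` and following the policy `π`. -/
noncomputable def vStep (M : FinMDP S A R) (π : Policy S A) (k : ℕ) (s : S) : ℝ :=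
  ∑ a : A, π.prob s a * qStep M π k s a

/-- The action-value function `q_π(s,a)`: the expected discounted return
`E_π[∑_k γ^k R_{t+k+1} | S_t = s, A_t = a]`. -/
noncomputable def qval (M : FinMDP S A R) (γ : ℝ) (π : Policy S A) (s : S) (a : A) : ℝ :=
  ∑' k : ℕ, γ ^ k * qStep M π k s a

/-- The state-value function `v_π(s)`: the expected discounted return
`E_π[∑_k γ^k R_{t+k+1} | S_t = s]`. -/
noncomputable def vval (M : FinMDP S A R) (γ : ℝ) (π : Policy S A) (s : S) : ℝ :=
  ∑' k : ℕ, γ ^ k * vStep M π k s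

/-- The optimal state-value function `v*(s) = max_π v_π(s)`. -/
noncomputable def vStar (M : FinMDP S A R) (γ : ℝ) (s : S) : ℝ :=
  ⨆ π : Policy S A, vval M γ π s

/-- The optimal action-value function `q*(s,a) = max_π q_π(s,a)`. -/
noncomputable def qStar (M : FinMDP S A R) (γ : ℝ) (s : S) (a : A) : ℝ :=
  ⨆ π : Policy S A, qval M γ π s a

/-- The deterministic policy selecting action `d s` in state `s` (as a point-mass
stochastic policy). -/
noncomputable def detPolicy [DecidableEq A] (d : S → A) : Policy S A where
  prob s a := if a = d s then 1 else 0
  nonneg s a := by split <;> norm_num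
  sum_one s := by simp
namespace MDPAux

variable {S A R : Type*} [Fintype S] [Fintype A] [Fintype R]

/-- one-step expected reward `r(s,a)` -/
noncomputable def rew (M : FinMDP S A R) (s : S) (a : A) : ℝ :=
  ∑ s' : S, ∑ r : R, M.p s a s' r * M.val r

/-- transition kernel `P(s'|s,a)` -/
noncomputable def Pk (M : FinMDP S A R) (s : S) (a : A) (s' : S) : ℝ :=
  ∑ r : R, M.p s a s' r

lemma Pk_nonneg (M : FinMDP S A R) (s : S) (a : A) (s' : S) : 0 ≤ Pk M s a s' :=
  Finset.sum_nonneg fun r _ => M.p_nonneg s a s' r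

lemma Pk_sum_one (M : FinMDP S A R) (s : S) (a : A) : ∑ s' : S, Pk M s a s' = 1 :=
  M.p_sum_one s a

noncomputable def Bnd (M : FinMDP S A R) : ℝ := ∑ s : S, ∑ a : A, |rew M s a|

lemma abs_rew_le (M : FinMDP S A R) (s : S) (a : A) : |rew M s a| ≤ Bnd M := by
  have h1 : |rew M s a| ≤ ∑ a' : A, |rew M s a'| :=
    Finset.single_le_sum (f := fun a' => |rew M s a'|)
      (fun a' _ => abs_nonneg _) (Finset.mem_univ a)
  refine h1.trans ?_
  exact Finset.single_le_sum (f := fun s' => ∑ a' : A, |rew M s' a'|)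
    (fun s' _ => Finset.sum_nonneg fun a' _ => abs_nonneg _) (Finset.mem_univ s)

lemma qStep_zero (M : FinMDP S A R) (π : Policy S A) (s : S) (a : A) :
    qStep M π 0 s a = rew M s a := rfl

lemma qStep_succ (M : FinMDP S A R) (π : Policy S A) (k : ℕ) (s : S) (a : A) :
    qStep M π (k+1) s a = ∑ s' : S, Pk M s a s' * vStep M π k s' := by
  show (∑ s' : S, ∑ r : R, M.p s a s' r * ∑ a' : A, π.prob s' a' * qStep M π k s' a') = _
  refine Finset.sum_congr rfl fun s' _ => ?_
  rw [Pk, Finset.sum_mul]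
  rfl

lemma abs_qStep_le (M : FinMDP S A R) (π : Policy S A) :
    ∀ k (s : S) (a : A), |qStep M π k s a| ≤ Bnd M := by
  intro k
  induction k with
  | zero => intro s a; exact abs_rew_le M s a
  | succ k ih =>
    have hv : ∀ s : S, |vStep M π k s| ≤ Bnd M := by
      intro s
      calc |vStep M π k s| ≤ ∑ a : A, π.prob s a * |qStep M π k s a| := by
            rw [vStep]
            refine (Finset.abs_sum_le_sum_abs _ _).trans ?_
            refine Finset.sum_le_sum fun a _ => ?_
            rw [abs_mul, abs_of_nonneg (π.nonneg s a)]
        _ ≤ ∑ a : A, π.prob s a * Bnd M :=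
            Finset.sum_le_sum fun a _ =>
              mul_le_mul_of_nonneg_left (ih s a) (π.nonneg s a)
        _ = Bnd M := by rw [← Finset.sum_mul, π.sum_one, one_mul]
    intro s a
    rw [qStep_succ]
    calc |∑ s' : S, Pk M s a s' * vStep M π k s'|
        ≤ ∑ s' : S, Pk M s a s' * |vStep M π k s'| := by
          refine (Finset.abs_sum_le_sum_abs _ _).trans ?_
          refine Finset.sum_le_sum fun s' _ => ?_
          rw [abs_mul, abs_of_nonneg (Pk_nonneg M s a s')]
      _ ≤ ∑ s' : S, Pk M s a s' * Bnd M :=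
          Finset.sum_le_sum fun s' _ =>
            mul_le_mul_of_nonneg_left (hv s') (Pk_nonneg M s a s')
      _ = Bnd M := by rw [← Finset.sum_mul, Pk_sum_one, one_mul]

lemma abs_vStep_le (M : FinMDP S A R) (π : Policy S A) (k : ℕ) (s : S) :
    |vStep M π k s| ≤ Bnd M := by
  calc |vStep M π k s| ≤ ∑ a : A, π.prob s a * |qStep M π k s a| := by
        rw [vStep]
        refine (Finset.abs_sum_le_sum_abs _ _).trans ?_
        refine Finset.sum_le_sum fun a _ => ?_
        rw [abs_mul, abs_of_nonneg (π.nonneg s a)]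
    _ ≤ ∑ a : A, π.prob s a * Bnd M :=
        Finset.sum_le_sum fun a _ =>
          mul_le_mul_of_nonneg_left (abs_qStep_le M π k s a) (π.nonneg s a)
    _ = Bnd M := by rw [← Finset.sum_mul, π.sum_one, one_mul]

lemma summable_q (M : FinMDP S A R) {γ : ℝ} (hγ0 : 0 ≤ γ) (hγ1 : γ < 1)
    (π : Policy S A) (s : S) (a : A) :
    Summable (fun k : ℕ => γ ^ k * qStep M π k s a) := by
  apply Summable.of_abs
  refine Summable.of_nonneg_of_le (fun k => abs_nonneg _) (fun k => ?_)
    ((summable_geometric_of_lt_one hγ0 hγ1).mul_right (Bnd M))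
  rw [abs_mul, abs_pow, abs_of_nonneg hγ0]
  exact mul_le_mul_of_nonneg_left (abs_qStep_le M π k s a) (pow_nonneg hγ0 k)

lemma summable_v (M : FinMDP S A R) {γ : ℝ} (hγ0 : 0 ≤ γ) (hγ1 : γ < 1)
    (π : Policy S A) (s : S) :
    Summable (fun k : ℕ => γ ^ k * vStep M π k s) := by
  apply Summable.of_abs
  refine Summable.of_nonneg_of_le (fun k => abs_nonneg _) (fun k => ?_)
    ((summable_geometric_of_lt_one hγ0 hγ1).mul_right (Bnd M))
  rw [abs_mul, abs_pow, abs_of_nonneg hγ0]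
  exact mul_le_mul_of_nonneg_left (abs_vStep_le M π k s) (pow_nonneg hγ0 k)

/-- Bellman equation for `qval`. -/
lemma qval_eq (M : FinMDP S A R) {γ : ℝ} (hγ0 : 0 ≤ γ) (hγ1 : γ < 1)
    (π : Policy S A) (s : S) (a : A) :
    qval M γ π s a = rew M s a + γ * ∑ s' : S, Pk M s a s' * vval M γ π s' := by
  rw [qval, Summable.tsum_eq_zero_add (summable_q M hγ0 hγ1 π s a)]
  congr 1
  · rw [qStep_zero]; ring
  have h1 : ∀ k : ℕ, γ ^ (k+1) * qStep M π (k+1) s a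
      = ∑ s' : S, γ * (Pk M s a s' * (γ ^ k * vStep M π k s')) := by
    intro k
    rw [qStep_succ, Finset.mul_sum]
    refine Finset.sum_congr rfl fun s' _ => ?_
    rw [pow_succ]; ring
  calc (∑' k : ℕ, γ ^ (k+1) * qStep M π (k+1) s a)
      = ∑' k : ℕ, ∑ s' : S, γ * (Pk M s a s' * (γ ^ k * vStep M π k s')) := by
        exact tsum_congr h1
    _ = ∑ s' : S, ∑' k : ℕ, γ * (Pk M s a s' * (γ ^ k * vStep M π k s')) := by
        refine Summable.tsum_finsetSum fun s' _ => ?_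
        exact ((summable_v M hγ0 hγ1 π s').mul_left _).mul_left _
    _ = ∑ s' : S, γ * (Pk M s a s' * vval M γ π s') := by
        refine Finset.sum_congr rfl fun s' _ => ?_
        rw [tsum_mul_left, tsum_mul_left]
        rfl
    _ = γ * ∑ s' : S, Pk M s a s' * vval M γ π s' := by rw [Finset.mul_sum]

/-- `v` in terms of `q`. -/
lemma vval_eq (M : FinMDP S A R) {γ : ℝ} (hγ0 : 0 ≤ γ) (hγ1 : γ < 1)
    (π : Policy S A) (s : S) :
    vval M γ π s = ∑ a : A, π.prob s a * qval M γ π s a := by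
  rw [vval]
  calc (∑' k : ℕ, γ ^ k * vStep M π k s)
      = ∑' k : ℕ, ∑ a : A, π.prob s a * (γ ^ k * qStep M π k s a) := by
        refine tsum_congr fun k => ?_
        rw [vStep, Finset.mul_sum]
        exact Finset.sum_congr rfl fun a _ => by ring
    _ = ∑ a : A, ∑' k : ℕ, π.prob s a * (γ ^ k * qStep M π k s a) :=
        Summable.tsum_finsetSum fun a _ => (summable_q M hγ0 hγ1 π s a).mul_left _
    _ = ∑ a : A, π.prob s a * qval M γ π s a := by
        refine Finset.sum_congr rfl fun a _ => ?_
        rw [tsum_mul_left]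
        rfl

lemma vval_det [DecidableEq A] (M : FinMDP S A R) {γ : ℝ} (hγ0 : 0 ≤ γ) (hγ1 : γ < 1)
    (d : S → A) (s : S) :
    vval M γ (detPolicy d) s = qval M γ (detPolicy d) s (d s) := by
  rw [vval_eq M hγ0 hγ1]
  simp [detPolicy, ite_mul]

lemma sum_prob_le (π : Policy S A) (s : S) (f : A → ℝ) (b : A) (hb : ∀ a, f a ≤ f b) :
    ∑ a : A, π.prob s a * f a ≤ f b := by
  calc ∑ a : A, π.prob s a * f a ≤ ∑ a : A, π.prob s a * f b :=
        Finset.sum_le_sum fun a _ => mul_le_mul_of_nonneg_left (hb a) (π.nonneg s a)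
    _ = f b := by rw [← Finset.sum_mul, π.sum_one, one_mul]

/-- Comparison lemma: a "sub-solution" of a Bellman-type equation is dominated by
a "super-solution" with the same rewards and kernel. -/
lemma cmp {γ : ℝ} (hγ0 : 0 ≤ γ) (hγ1 : γ < 1) (u w c : S → ℝ) (K : S → S → ℝ)
    (hK0 : ∀ s s', 0 ≤ K s s') (hK1 : ∀ s, ∑ s' : S, K s s' = 1)
    (hu : ∀ s, u s ≤ c s + γ * ∑ s' : S, K s s' * u s')
    (hw : ∀ s, c s + γ * ∑ s' : S, K s s' * w s' ≤ w s) :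
    ∀ s, u s ≤ w s := by
  by_cases hS : Nonempty S
  · obtain ⟨s0, -, hs0⟩ := Finset.exists_max_image (Finset.univ : Finset S)
      (fun s => u s - w s) Finset.univ_nonempty
    have hs0' : ∀ s : S, u s - w s ≤ u s0 - w s0 := fun s => hs0 s (Finset.mem_univ s)
    have key : u s0 - w s0 ≤ γ * (u s0 - w s0) := by
      have h1 : u s0 - w s0 ≤
          γ * ∑ s' : S, K s0 s' * u s' - γ * ∑ s' : S, K s0 s' * w s' := by
        have := hu s0; have := hw s0; linarith
      have h2 : γ * ∑ s' : S, K s0 s' * u s' - γ * ∑ s' : S, K s0 s' * w s'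
          = γ * ∑ s' : S, K s0 s' * (u s' - w s') := by
        rw [← mul_sub, ← Finset.sum_sub_distrib]
        congr 1
        exact Finset.sum_congr rfl fun s' _ => by ring
      have h3 : ∑ s' : S, K s0 s' * (u s' - w s') ≤ ∑ s' : S, K s0 s' * (u s0 - w s0) :=
        Finset.sum_le_sum fun s' _ => mul_le_mul_of_nonneg_left (hs0' s') (hK0 _ _)
      have h4 : ∑ s' : S, K s0 s' * (u s0 - w s0) = u s0 - w s0 := by
        rw [← Finset.sum_mul, hK1, one_mul]
      have h5 : γ * ∑ s' : S, K s0 s' * (u s' - w s') ≤ γ * (u s0 - w s0) := by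
        rw [← h4]
        exact mul_le_mul_of_nonneg_left h3 hγ0
      linarith
    have hM : u s0 - w s0 ≤ 0 := by nlinarith
    intro s
    have := hs0' s
    linarith
  · intro s; exact absurd ⟨s⟩ hS

end MDPAux

open MDPAux

/-- Optimal policies in a finite MDP with discount factor `γ ∈ [0,1)`:
(i) there exists an optimal policy `π*` with `v_{π*}(s) ≥ v_π(s)` for every policy
`π` and state `s`; (ii) there always exists a deterministic optimal policy;
(iii) every optimal policy attains the optimal state-value function `v*`;
(iv) every optimal policy attains the optimal action-value function `q*`. -/
theorem exists_optimal_policy [Nonempty A] [DecidableEq A]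
    (M : FinMDP S A R) (γ : ℝ) (hγ0 : 0 ≤ γ) (hγ1 : γ < 1) :
    (∃ πs : Policy S A, ∀ (π : Policy S A) (s : S), vval M γ π s ≤ vval M γ πs s) ∧
    (∃ d : S → A, ∀ (π : Policy S A) (s : S), vval M γ π s ≤ vval M γ (detPolicy d) s) ∧
    (∀ πs : Policy S A, (∀ (π : Policy S A) (s : S), vval M γ π s ≤ vval M γ πs s) →
      ∀ s : S, vval M γ πs s = vStar M γ s) ∧
    (∀ πs : Policy S A, (∀ (π : Policy S A) (s : S), vval M γ π s ≤ vval M γ πs s) →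
      ∀ (s : S) (a : A), qval M γ πs s a = qStar M γ s a) := by
  classical
  -- choose an optimal deterministic policy by maximizing total value
  obtain ⟨dstar, -, hdstar⟩ := Finset.exists_max_image (Finset.univ : Finset (S → A))
    (fun d => ∑ s : S, vval M γ (detPolicy d) s) Finset.univ_nonempty
  set πd := detPolicy dstar with hπd
  -- a greedy improvement of πd
  choose d' hd'mem hd' using fun s : S => Finset.exists_max_image (Finset.univ : Finset A)
    (fun a => qval M γ πd s a) Finset.univ_nonempty
  have hd'' : ∀ s (a : A), qval M γ πd s a ≤ qval M γ πd s (d' s) :=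
    fun s a => hd' s a (Finset.mem_univ a)
  -- policy improvement: vval πd ≤ vval (detPolicy d') pointwise
  have himp : ∀ s, vval M γ πd s ≤ vval M γ (detPolicy d') s := by
    refine cmp hγ0 hγ1 _ _ (fun s => rew M s (d' s)) (fun s => Pk M s (d' s))
      (fun s s' => Pk_nonneg M s (d' s) s') (fun s => Pk_sum_one M s (d' s)) ?_ ?_
    · intro s
      rw [← qval_eq M hγ0 hγ1 πd s (d' s), vval_eq M hγ0 hγ1 πd s]
      exact sum_prob_le πd s _ (d' s) (hd'' s)
    · intro s
      rw [← qval_eq M hγ0 hγ1 (detPolicy d') s (d' s), ← vval_det M hγ0 hγ1 d' s]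
  -- by maximality, the improvement is an equality
  have hsumle : ∑ s : S, vval M γ (detPolicy d') s ≤ ∑ s : S, vval M γ πd s :=
    hdstar d' (Finset.mem_univ d')
  have heq : ∀ s, vval M γ πd s = vval M γ (detPolicy d') s := by
    have hsum : ∑ s : S, vval M γ πd s = ∑ s : S, vval M γ (detPolicy d') s :=
      le_antisymm (Finset.sum_le_sum fun s _ => himp s) hsumle
    intro s
    exact (Finset.sum_eq_sum_iff_of_le (fun s _ => himp s)).mp hsum s (Finset.mem_univ s)
  -- key Bellman optimality fact for πd
  have hkey : ∀ s (a : A), qval M γ πd s a ≤ vval M γ πd s := by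
    intro s a
    calc qval M γ πd s a ≤ qval M γ πd s (d' s) := hd'' s a
      _ = rew M s (d' s) + γ * ∑ s' : S, Pk M s (d' s) s' * vval M γ πd s' :=
          qval_eq M hγ0 hγ1 πd s (d' s)
      _ = rew M s (d' s) + γ * ∑ s' : S, Pk M s (d' s) s' * vval M γ (detPolicy d') s' := by
          simp_rw [heq]
      _ = qval M γ (detPolicy d') s (d' s) := (qval_eq M hγ0 hγ1 (detPolicy d') s (d' s)).symm
      _ = vval M γ (detPolicy d') s := (vval_det M hγ0 hγ1 d' s).symm
      _ = vval M γ πd s := (heq s).symm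
  -- global optimality of πd
  have hopt : ∀ (π : Policy S A) (s : S), vval M γ π s ≤ vval M γ πd s := by
    intro π
    choose b hbmem hb using fun s : S => Finset.exists_max_image (Finset.univ : Finset A)
      (fun a => qval M γ π s a) Finset.univ_nonempty
    refine cmp hγ0 hγ1 _ _ (fun s => rew M s (b s)) (fun s => Pk M s (b s))
      (fun s s' => Pk_nonneg M s (b s) s') (fun s => Pk_sum_one M s (b s)) ?_ ?_
    · intro s
      rw [← qval_eq M hγ0 hγ1 π s (b s), vval_eq M hγ0 hγ1 π s]
      exact sum_prob_le π s _ (b s) (fun a => hb s a (Finset.mem_univ a))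
    · intro s
      rw [← qval_eq M hγ0 hγ1 πd s (b s)]
      exact hkey s (b s)
  haveI : Nonempty (Policy S A) := ⟨πd⟩
  refine ⟨⟨πd, hopt⟩, ⟨dstar, hopt⟩, ?_, ?_⟩
  · intro πs hπs s
    rw [vStar]
    refine le_antisymm (le_ciSup (f := fun π : Policy S A => vval M γ π s) ⟨vval M γ πs s, ?_⟩ πs) (ciSup_le fun π => hπs π s)
    rintro x ⟨π, rfl⟩
    exact hπs π s
  · intro πs hπs s a
    have hq : ∀ π : Policy S A, qval M γ π s a ≤ qval M γ πs s a := by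
      intro π
      rw [qval_eq M hγ0 hγ1 π s a, qval_eq M hγ0 hγ1 πs s a]
      refine add_le_add_right (mul_le_mul_of_nonneg_left ?_ hγ0) _
      exact Finset.sum_le_sum fun s' _ =>
        mul_le_mul_of_nonneg_left (hπs π s') (Pk_nonneg M s a s')
    rw [qStar]
    refine le_antisymm (le_ciSup (f := fun π : Policy S A => qval M γ π s a) ⟨qval M γ πs s a, ?_⟩ πs) (ciSup_le fun π => hq π)
    rintro x ⟨π, rfl⟩
    exact hq π
end

section
/- In a finite MDP with discount factor γ ∈ [0,1), the optimal state-value function is the unique solution of the Bellman optimality equation: if w : S → ℝ satisfies w(s) = max_a ∑_{s',r} p(s',r|s,a)[r + γ w(s')] for all s, then w = v*; analogously, if u : S × A → ℝ satisfies u(s,a) = ∑_{s',r} p(s',r|s,a)[r + γ max_{a'} u(s',a')] for all s, a, then u = q*. -/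
open Finset

variable {S A R : Type*} [Fintype S] [Fintype A] [Fintype R]

section BellmanHelpers

variable (M : FinMDP S A R)

/-- Bound on reward values. -/
noncomputable def Cbd : ℝ := ∑ r : R, |M.val r|

lemma abs_val_le_Cbd (r : R) : |M.val r| ≤ Cbd M := by
  unfold Cbd
  exact Finset.single_le_sum (f := fun r : R => |M.val r|) (fun _ _ => abs_nonneg _) (mem_univ r)

lemma exp_le (s : S) (a : A) (f : S → R → ℝ) (C : ℝ) (hf : ∀ s' r, f s' r ≤ C) :
    (∑ s' : S, ∑ r : R, M.p s a s' r * f s' r) ≤ C := by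
  calc (∑ s' : S, ∑ r : R, M.p s a s' r * f s' r)
      ≤ ∑ s' : S, ∑ r : R, M.p s a s' r * C := by
        refine Finset.sum_le_sum fun s' _ => Finset.sum_le_sum fun r _ => ?_
        exact mul_le_mul_of_nonneg_left (hf s' r) (M.p_nonneg s a s' r)
    _ = (∑ s' : S, ∑ r : R, M.p s a s' r) * C := by simp [Finset.sum_mul]
    _ = C := by rw [M.p_sum_one]; ring

lemma exp_abs_le (s : S) (a : A) (f : S → R → ℝ) (C : ℝ) (hf : ∀ s' r, |f s' r| ≤ C) :
    |∑ s' : S, ∑ r : R, M.p s a s' r * f s' r| ≤ C := by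
  rw [abs_le]
  constructor
  · have h := exp_le M s a (fun s' r => -f s' r) C
      (fun s' r => neg_le_of_neg_le ((abs_le.mp (hf s' r)).1))
    simp only [mul_neg, Finset.sum_neg_distrib] at h
    linarith
  · exact exp_le M s a f C fun s' r => (abs_le.mp (hf s' r)).2

lemma pol_le (π : Policy S A) (s : S) (g : A → ℝ) (C : ℝ) (hg : ∀ a, g a ≤ C) :
    (∑ a : A, π.prob s a * g a) ≤ C := by
  calc (∑ a : A, π.prob s a * g a)
      ≤ ∑ a : A, π.prob s a * C :=
        Finset.sum_le_sum fun a _ => mul_le_mul_of_nonneg_left (hg a) (π.nonneg s a)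
    _ = (∑ a : A, π.prob s a) * C := by simp [Finset.sum_mul]
    _ = C := by rw [π.sum_one]; ring

lemma pol_abs_le (π : Policy S A) (s : S) (g : A → ℝ) (C : ℝ) (hg : ∀ a, |g a| ≤ C) :
    |∑ a : A, π.prob s a * g a| ≤ C := by
  rw [abs_le]
  constructor
  · have h := pol_le π s (fun a => -g a) C
      (fun a => neg_le_of_neg_le ((abs_le.mp (hg a)).1))
    simp only [mul_neg, Finset.sum_neg_distrib] at h
    linarith
  · exact pol_le π s g C fun a => (abs_le.mp (hg a)).2

lemma qStep_abs_le (π : Policy S A) : ∀ (k : ℕ) (s : S) (a : A), |qStep M π k s a| ≤ Cbd M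
  | 0, s, a => by
    simp only [qStep]
    exact exp_abs_le M s a (fun _ r => M.val r) _ fun _ r => abs_val_le_Cbd M r
  | (k + 1), s, a => by
    simp only [qStep]
    refine exp_abs_le M s a _ _ fun s' _ => ?_
    exact pol_abs_le π s' _ _ fun a' => qStep_abs_le π k s' a'

lemma vStep_abs_le (π : Policy S A) (k : ℕ) (s : S) : |vStep M π k s| ≤ Cbd M :=
  pol_abs_le π s _ _ fun a => qStep_abs_le M π k s a

variable {γ : ℝ}

lemma summable_qterm (hγ0 : 0 ≤ γ) (hγ1 : γ < 1) (π : Policy S A) (s : S) (a : A) :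
    Summable (fun k => γ ^ k * qStep M π k s a) := by
  refine Summable.of_norm_bounded (g := fun k => Cbd M * γ ^ k)
    ((summable_geometric_of_lt_one hγ0 hγ1).mul_left _) fun k => ?_
  rw [Real.norm_eq_abs, abs_mul, abs_pow, abs_of_nonneg hγ0, mul_comm]
  exact mul_le_mul_of_nonneg_right (qStep_abs_le M π k s a) (pow_nonneg hγ0 k)

lemma summable_vterm (hγ0 : 0 ≤ γ) (hγ1 : γ < 1) (π : Policy S A) (s : S) :
    Summable (fun k => γ ^ k * vStep M π k s) := by
  refine Summable.of_norm_bounded (g := fun k => Cbd M * γ ^ k)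
    ((summable_geometric_of_lt_one hγ0 hγ1).mul_left _) fun k => ?_
  rw [Real.norm_eq_abs, abs_mul, abs_pow, abs_of_nonneg hγ0, mul_comm]
  exact mul_le_mul_of_nonneg_right (vStep_abs_le M π k s) (pow_nonneg hγ0 k)

lemma qval_abs_le (hγ0 : 0 ≤ γ) (hγ1 : γ < 1) (π : Policy S A) (s : S) (a : A) :
    |qval M γ π s a| ≤ Cbd M * (1 - γ)⁻¹ := by
  have h := tsum_of_norm_bounded
    ((hasSum_geometric_of_lt_one hγ0 hγ1).mul_left (Cbd M))
    (f := fun k => γ ^ k * qStep M π k s a) (fun k => by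
      rw [Real.norm_eq_abs, abs_mul, abs_pow, abs_of_nonneg hγ0, mul_comm]
      exact mul_le_mul_of_nonneg_right (qStep_abs_le M π k s a) (pow_nonneg hγ0 k))
  rwa [Real.norm_eq_abs] at h

lemma vval_abs_le (hγ0 : 0 ≤ γ) (hγ1 : γ < 1) (π : Policy S A) (s : S) :
    |vval M γ π s| ≤ Cbd M * (1 - γ)⁻¹ := by
  have h := tsum_of_norm_bounded
    ((hasSum_geometric_of_lt_one hγ0 hγ1).mul_left (Cbd M))
    (f := fun k => γ ^ k * vStep M π k s) (fun k => by
      rw [Real.norm_eq_abs, abs_mul, abs_pow, abs_of_nonneg hγ0, mul_comm]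
      exact mul_le_mul_of_nonneg_right (vStep_abs_le M π k s) (pow_nonneg hγ0 k))
  rwa [Real.norm_eq_abs] at h

lemma vval_eq_sum (hγ0 : 0 ≤ γ) (hγ1 : γ < 1) (π : Policy S A) (s : S) :
    vval M γ π s = ∑ a : A, π.prob s a * qval M γ π s a := by
  unfold vval vStep qval
  have h : (fun k => γ ^ k * ∑ a : A, π.prob s a * qStep M π k s a)
      = fun k => ∑ a : A, π.prob s a * (γ ^ k * qStep M π k s a) := by
    funext k
    rw [Finset.mul_sum]
    exact Finset.sum_congr rfl fun a _ => by ring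
  rw [h, Summable.tsum_finsetSum fun a _ => (summable_qterm M hγ0 hγ1 π s a).mul_left _]
  exact Finset.sum_congr rfl fun a _ => tsum_mul_left

lemma qval_eq (hγ0 : 0 ≤ γ) (hγ1 : γ < 1) (π : Policy S A) (s : S) (a : A) :
    qval M γ π s a = ∑ s' : S, ∑ r : R, M.p s a s' r * (M.val r + γ * vval M γ π s') := by
  unfold qval
  rw [Summable.tsum_eq_zero_add (summable_qterm M hγ0 hγ1 π s a)]
  have h1 : (fun k => γ ^ (k + 1) * qStep M π (k + 1) s a)
      = fun k => ∑ s' : S, ∑ r : R, M.p s a s' r * (γ * (γ ^ k * vStep M π k s')) := by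
    funext k
    simp only [qStep]
    rw [Finset.mul_sum]
    refine Finset.sum_congr rfl fun s' _ => ?_
    rw [Finset.mul_sum]
    refine Finset.sum_congr rfl fun r _ => ?_
    unfold vStep
    ring
  rw [h1]
  rw [Summable.tsum_finsetSum fun s' _ => summable_sum fun r _ =>
    (((summable_vterm M hγ0 hγ1 π s').mul_left γ).mul_left (M.p s a s' r))]
  have h2 : ∀ s' : S, (∑' k, ∑ r : R, M.p s a s' r * (γ * (γ ^ k * vStep M π k s')))
      = ∑ r : R, M.p s a s' r * (γ * vval M γ π s') := by
    intro s'
    rw [Summable.tsum_finsetSum fun r _ =>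
      (((summable_vterm M hγ0 hγ1 π s').mul_left γ).mul_left (M.p s a s' r))]
    refine Finset.sum_congr rfl fun r _ => ?_
    rw [tsum_mul_left, tsum_mul_left]
    rfl
  simp only [h2]
  simp only [qStep, pow_zero, one_mul]
  rw [← Finset.sum_add_distrib]
  refine Finset.sum_congr rfl fun s' _ => ?_
  rw [← Finset.sum_add_distrib]
  exact Finset.sum_congr rfl fun r _ => by ring

lemma vval_det [DecidableEq A] (d : S → A) (hγ0 : 0 ≤ γ) (hγ1 : γ < 1) (s : S) :
    vval M γ (detPolicy d) s = qval M γ (detPolicy d) s (d s) := by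
  rw [vval_eq_sum M hγ0 hγ1]
  simp [detPolicy, Finset.sum_ite_eq']

lemma contraction_le_zero {T : Type*} [Fintype T] [Nonempty T] (g : T → ℝ)
    (hγ0 : 0 ≤ γ) (hγ1 : γ < 1) (h : ∀ t, g t ≤ γ * ⨆ t', g t') : ∀ t, g t ≤ 0 := by
  have hm : (⨆ t', g t') ≤ γ * ⨆ t', g t' := ciSup_le h
  have hm0 : (⨆ t', g t') ≤ 0 := by nlinarith
  intro t
  nlinarith [h t]

end BellmanHelpers
/-- Uniqueness of solutions of the Bellman optimality equations: in a finite MDP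
with discount factor `γ ∈ [0,1)`, any `w : S → ℝ` satisfying the Bellman
optimality equation for `v*` equals `v*`, and any `u : S × A → ℝ` satisfying the
Bellman optimality equation for `q*` equals `q*`. -/
theorem bellman_optimality_unique_solution [Nonempty A]
    (M : FinMDP S A R) (γ : ℝ) (hγ0 : 0 ≤ γ) (hγ1 : γ < 1) :
    (∀ w : S → ℝ,
      (∀ s : S, w s =
        ⨆ a : A, ∑ s' : S, ∑ r : R, M.p s a s' r * (M.val r + γ * w s')) →
      ∀ s : S, w s = vStar M γ s) ∧
    (∀ u : S → A → ℝ,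
      (∀ (s : S) (a : A), u s a =
        ∑ s' : S, ∑ r : R, M.p s a s' r * (M.val r + γ * ⨆ a' : A, u s' a')) →
      ∀ (s : S) (a : A), u s a = qStar M γ s a) := by
  classical
  constructor
  · -- v* part
    intro w hw s₀
    haveI : Nonempty S := ⟨s₀⟩
    haveI : Nonempty (Policy S A) := ⟨detPolicy fun _ => Classical.arbitrary A⟩
    -- Step 1: every policy's value is ≤ w
    have h1 : ∀ (π : Policy S A) (s : S), vval M γ π s ≤ w s := by
      intro π
      have key : ∀ s, vval M γ π s - w s ≤ γ * ⨆ s', (vval M γ π s' - w s') := by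
        intro s
        set m := ⨆ s', (vval M γ π s' - w s') with hm
        have hbdd : BddAbove (Set.range fun s' => vval M γ π s' - w s') :=
          Set.Finite.bddAbove (Set.finite_range _)
        have hbddB : BddAbove (Set.range fun a : A =>
            ∑ s' : S, ∑ r : R, M.p s a s' r * (M.val r + γ * w s')) :=
          Set.Finite.bddAbove (Set.finite_range _)
        have hq : ∀ a : A, qval M γ π s a ≤
            (∑ s' : S, ∑ r : R, M.p s a s' r * (M.val r + γ * w s')) + γ * m := by
          intro a
          rw [qval_eq M hγ0 hγ1 π s a]
          have hsplit : (∑ s' : S, ∑ r : R, M.p s a s' r * (M.val r + γ * vval M γ π s'))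
              = (∑ s' : S, ∑ r : R, M.p s a s' r * (M.val r + γ * w s'))
                + γ * ∑ s' : S, ∑ r : R, M.p s a s' r * (vval M γ π s' - w s') := by
            rw [Finset.mul_sum, ← Finset.sum_add_distrib]
            refine Finset.sum_congr rfl fun s' _ => ?_
            rw [Finset.mul_sum, ← Finset.sum_add_distrib]
            exact Finset.sum_congr rfl fun r _ => by ring
          have hle : (∑ s' : S, ∑ r : R, M.p s a s' r * (vval M γ π s' - w s')) ≤ m :=
            exp_le M s a _ m fun s' _ => le_ciSup hbdd s'
          nlinarith [hsplit, hle]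
        have hq2 : ∀ a : A, qval M γ π s a ≤
            (⨆ a' : A, ∑ s' : S, ∑ r : R, M.p s a' s' r * (M.val r + γ * w s')) + γ * m :=
          fun a => le_trans (hq a) (add_le_add_left (le_ciSup hbddB a) _)
        have hv : vval M γ π s ≤
            (⨆ a' : A, ∑ s' : S, ∑ r : R, M.p s a' s' r * (M.val r + γ * w s')) + γ * m := by
          rw [vval_eq_sum M hγ0 hγ1]
          exact pol_le π s _ _ hq2
        rw [← hw s] at hv
        linarith
      have := contraction_le_zero (fun s => vval M γ π s - w s) hγ0 hγ1 key
      intro s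
      have h := this s
      linarith
    have h2 : vStar M γ s₀ ≤ w s₀ := ciSup_le fun π => h1 π s₀
    -- Step 2: greedy policy achieves w
    choose d hdmem hdmax using fun s => Finset.exists_max_image univ
      (fun a => ∑ s' : S, ∑ r : R, M.p s a s' r * (M.val r + γ * w s')) univ_nonempty
    have hwB : ∀ s, w s = ∑ s' : S, ∑ r : R, M.p s (d s) s' r * (M.val r + γ * w s') := by
      intro s
      rw [hw s]
      exact le_antisymm (ciSup_le fun a => hdmax s a (mem_univ a))
        (le_ciSup (f := fun a : A => ∑ s' : S, ∑ r : R, M.p s a s' r * (M.val r + γ * w s'))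
          (Set.Finite.bddAbove (Set.finite_range _)) (d s))
    set π := detPolicy d with hπ
    have hvπ : ∀ s, vval M γ π s
        = ∑ s' : S, ∑ r : R, M.p s (d s) s' r * (M.val r + γ * vval M γ π s') := by
      intro s
      rw [hπ, vval_det M d hγ0 hγ1, qval_eq M hγ0 hγ1]
    have key2 : ∀ s, |w s - vval M γ π s| ≤ γ * ⨆ s', |w s' - vval M γ π s'| := by
      intro s
      have hbdd : BddAbove (Set.range fun s' => |w s' - vval M γ π s'|) :=
        Set.Finite.bddAbove (Set.finite_range _)
      have hdiff : w s - vval M γ π s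
          = γ * ∑ s' : S, ∑ r : R, M.p s (d s) s' r * (w s' - vval M γ π s') := by
        rw [hwB s, hvπ s, Finset.mul_sum, ← Finset.sum_sub_distrib]
        refine Finset.sum_congr rfl fun s' _ => ?_
        rw [Finset.mul_sum, ← Finset.sum_sub_distrib]
        exact Finset.sum_congr rfl fun r _ => by ring
      rw [hdiff, abs_mul, abs_of_nonneg hγ0]
      exact mul_le_mul_of_nonneg_left
        (exp_abs_le M s (d s) _ _ fun s' _ => le_ciSup hbdd s') hγ0
    have hz := contraction_le_zero (fun s => |w s - vval M γ π s|) hγ0 hγ1 key2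
    have heq : w s₀ = vval M γ π s₀ := by
      have h0 : |w s₀ - vval M γ π s₀| = 0 := le_antisymm (hz s₀) (abs_nonneg _)
      have := abs_eq_zero.mp h0
      linarith
    have hbddv : BddAbove (Set.range fun π' : Policy S A => vval M γ π' s₀) :=
      ⟨Cbd M * (1 - γ)⁻¹, by
        rintro x ⟨π', rfl⟩
        exact (abs_le.mp (vval_abs_le M hγ0 hγ1 π' s₀)).2⟩
    have h3 : vval M γ π s₀ ≤ vStar M γ s₀ := le_ciSup hbddv π
    linarith
  · -- q* part
    intro u hu s₀ a₀
    haveI : Nonempty S := ⟨s₀⟩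
    haveI : Nonempty (Policy S A) := ⟨detPolicy fun _ => Classical.arbitrary A⟩
    -- Step 1: every policy's q-value is ≤ u
    have h1 : ∀ (π : Policy S A) (s : S) (a : A), qval M γ π s a ≤ u s a := by
      intro π
      have key : ∀ t : S × A, qval M γ π t.1 t.2 - u t.1 t.2
          ≤ γ * ⨆ t' : S × A, (qval M γ π t'.1 t'.2 - u t'.1 t'.2) := by
        intro t
        obtain ⟨s, a⟩ := t
        set m := ⨆ t' : S × A, (qval M γ π t'.1 t'.2 - u t'.1 t'.2) with hm
        have hbdd : BddAbove (Set.range fun t' : S × A =>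
            qval M γ π t'.1 t'.2 - u t'.1 t'.2) :=
          Set.Finite.bddAbove (Set.finite_range _)
        have hvW : ∀ s' : S, vval M γ π s' - (⨆ a' : A, u s' a') ≤ m := by
          intro s'
          have hbddu : BddAbove (Set.range fun a' : A => u s' a') :=
            Set.Finite.bddAbove (Set.finite_range _)
          have : ∀ a' : A, qval M γ π s' a' ≤ (⨆ a'' : A, u s' a'') + m := fun a' => by
            have h4 : qval M γ π s' a' - u s' a' ≤ m := le_ciSup hbdd (s', a')
            have h5 : u s' a' ≤ ⨆ a'' : A, u s' a'' := le_ciSup hbddu a'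
            linarith
          have := pol_le π s' _ _ this
          rw [← vval_eq_sum M hγ0 hγ1] at this
          linarith
        rw [qval_eq M hγ0 hγ1 π s a, hu s a]
        have hsplit : (∑ s' : S, ∑ r : R, M.p s a s' r * (M.val r + γ * vval M γ π s'))
            - (∑ s' : S, ∑ r : R, M.p s a s' r * (M.val r + γ * ⨆ a' : A, u s' a'))
            = γ * ∑ s' : S, ∑ r : R,
                M.p s a s' r * (vval M γ π s' - ⨆ a' : A, u s' a') := by
          rw [Finset.mul_sum, ← Finset.sum_sub_distrib]
          refine Finset.sum_congr rfl fun s' _ => ?_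
          rw [Finset.mul_sum, ← Finset.sum_sub_distrib]
          exact Finset.sum_congr rfl fun r _ => by ring
        have hle : (∑ s' : S, ∑ r : R,
            M.p s a s' r * (vval M γ π s' - ⨆ a' : A, u s' a')) ≤ m :=
          exp_le M s a _ m fun s' _ => hvW s'
        nlinarith [hsplit, hle]
      have := contraction_le_zero
        (fun t : S × A => qval M γ π t.1 t.2 - u t.1 t.2) hγ0 hγ1 key
      intro s a
      have h := this (s, a)
      dsimp only at h
      linarith
    have h2 : qStar M γ s₀ a₀ ≤ u s₀ a₀ := ciSup_le fun π => h1 π s₀ a₀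
    -- Step 2: greedy policy achieves u
    choose d hdmem hdmax using fun s => Finset.exists_max_image univ (fun a => u s a)
      univ_nonempty
    have hWd : ∀ s, (⨆ a' : A, u s a') = u s (d s) := fun s =>
      le_antisymm (ciSup_le fun a => hdmax s a (mem_univ a))
        (le_ciSup (Set.Finite.bddAbove (Set.finite_range _)) (d s))
    have huB : ∀ s a, u s a
        = ∑ s' : S, ∑ r : R, M.p s a s' r * (M.val r + γ * u s' (d s')) := by
      intro s a
      rw [hu s a]
      exact Finset.sum_congr rfl fun s' _ => Finset.sum_congr rfl fun r _ => by
        rw [hWd s']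
    set π := detPolicy d with hπ
    have hqB : ∀ s a, qval M γ π s a
        = ∑ s' : S, ∑ r : R, M.p s a s' r * (M.val r + γ * qval M γ π s' (d s')) := by
      intro s a
      rw [qval_eq M hγ0 hγ1]
      exact Finset.sum_congr rfl fun s' _ => Finset.sum_congr rfl fun r _ => by
        rw [hπ, vval_det M d hγ0 hγ1]
    have key2 : ∀ t : S × A, |u t.1 t.2 - qval M γ π t.1 t.2|
        ≤ γ * ⨆ t' : S × A, |u t'.1 t'.2 - qval M γ π t'.1 t'.2| := by
      intro t
      obtain ⟨s, a⟩ := t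
      have hbdd : BddAbove (Set.range fun t' : S × A =>
          |u t'.1 t'.2 - qval M γ π t'.1 t'.2|) :=
        Set.Finite.bddAbove (Set.finite_range _)
      have hdiff : u s a - qval M γ π s a
          = γ * ∑ s' : S, ∑ r : R,
              M.p s a s' r * (u s' (d s') - qval M γ π s' (d s')) := by
        rw [huB s a, hqB s a, Finset.mul_sum, ← Finset.sum_sub_distrib]
        refine Finset.sum_congr rfl fun s' _ => ?_
        rw [Finset.mul_sum, ← Finset.sum_sub_distrib]
        exact Finset.sum_congr rfl fun r _ => by ring
      rw [hdiff, abs_mul, abs_of_nonneg hγ0]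
      exact mul_le_mul_of_nonneg_left
        (exp_abs_le M s a _ _ fun s' _ => le_ciSup hbdd (s', d s')) hγ0
    have hz := contraction_le_zero
      (fun t : S × A => |u t.1 t.2 - qval M γ π t.1 t.2|) hγ0 hγ1 key2
    have heq : u s₀ a₀ = qval M γ π s₀ a₀ := by
      have h0 : |u s₀ a₀ - qval M γ π s₀ a₀| = 0 := le_antisymm (hz (s₀, a₀)) (abs_nonneg _)
      have := abs_eq_zero.mp h0
      linarith
    have hbddq : BddAbove (Set.range fun π' : Policy S A => qval M γ π' s₀ a₀) :=
      ⟨Cbd M * (1 - γ)⁻¹, by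
        rintro x ⟨π', rfl⟩
        exact (abs_le.mp (qval_abs_le M hγ0 hγ1 π' s₀ a₀)).2⟩
    have h3 : qval M γ π s₀ a₀ ≤ qStar M γ s₀ a₀ := le_ciSup hbddq π
    linarith
end
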